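/- arXiv:2011.03319 — 14 statements merged into one kernel-verified Lean document; each statement's English description precedes it below -/
import Mathlib

section
/- In an increasing Lagois connection (L, α, γ, M) between complete lattices, for every l ∈ L, γ(α(l)) is the infimum of the set { l* ∈ γ[M] | l ≤ l* }. -/
theorem stmt_3 {L M : Type*} [CompleteLattice L] [CompleteLattice M]
    (α : L → M) (γ : M → L)
    (hα : Monotone α) (hγ : Monotone γ)
    (lc1 : ∀ l, l ≤ γ (α l)) (lc2 : ∀ m, m ≤ α (γ m))
    (lc3 : α ∘ γ ∘ α = α) (lc4 : γ ∘ α ∘ γ = γ) :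
    ∀ l : L, γ (α l) = sInf {l' | l' ∈ Set.range γ ∧ l ≤ l'} := by
  intro l
  apply le_antisymm
  · apply le_sInf
    rintro l' ⟨⟨m, rfl⟩, hl⟩
    calc γ (α l) ≤ γ (α (γ m)) := hγ (hα hl)
      _ = γ m := congrFun lc4 m
  · exact sInf_le ⟨⟨α l, rfl⟩, lc1 l⟩
end

section
/- In an increasing Lagois connection (L, α, γ, M), the restriction of α to the image γ[M] and the restriction of γ to the image α[L] are mutually inverse order isomorphisms between γ[M] and α[L]. -/
theorem stmt_6 {L M : Type*} [PartialOrder L] [PartialOrder M]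
    (α : L → M) (γ : M → L)
    (hα : Monotone α) (hγ : Monotone γ)
    (lc1 : ∀ l, l ≤ γ (α l)) (lc2 : ∀ m, m ≤ α (γ m))
    (lc3 : α ∘ γ ∘ α = α) (lc4 : γ ∘ α ∘ γ = γ) :
    (∀ l ∈ Set.range γ, α l ∈ Set.range α ∧ γ (α l) = l) ∧
    (∀ m ∈ Set.range α, γ m ∈ Set.range γ ∧ α (γ m) = m) ∧
    (∀ l ∈ Set.range γ, ∀ l' ∈ Set.range γ, (l ≤ l' ↔ α l ≤ α l')) ∧
    (∀ m ∈ Set.range α, ∀ m' ∈ Set.range α, (m ≤ m' ↔ γ m ≤ γ m')) := by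
  have h3 : ∀ l, α (γ (α l)) = α l := fun l => congrFun lc3 l
  have h4 : ∀ m, γ (α (γ m)) = γ m := fun m => congrFun lc4 m
  refine ⟨?_, ?_, ?_, ?_⟩
  · rintro l ⟨m, rfl⟩; exact ⟨⟨γ m, rfl⟩, h4 m⟩
  · rintro m ⟨l, rfl⟩; exact ⟨⟨α l, rfl⟩, h3 l⟩
  · rintro l ⟨m, rfl⟩ l' ⟨m', rfl⟩
    exact ⟨fun h => hα h, fun h => by
      have := hγ h; rwa [h4, h4] at this⟩
  · rintro m ⟨l, rfl⟩ m' ⟨l', rfl⟩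
    exact ⟨fun h => hγ h, fun h => by
      have := hα h; rwa [h3, h3] at this⟩
end

section
/- Let (L, α, γ, M) be an increasing Lagois connection and A ⊆ γ[M]. If a subset A of γ[M] has an infimum in L, then that infimum belongs to γ[M] (hence equals the infimum of A computed in γ[M] with the inherited order). -/
theorem stmt_7 {L M : Type*} [PartialOrder L] [PartialOrder M]
    (α : L → M) (γ : M → L)
    (hα : Monotone α) (hγ : Monotone γ)
    (lc1 : ∀ l, l ≤ γ (α l)) (lc2 : ∀ m, m ≤ α (γ m))
    (lc3 : α ∘ γ ∘ α = α) (lc4 : γ ∘ α ∘ γ = γ)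
    (A : Set L) (hA : A ⊆ Set.range γ)
    (a : L) (ha : IsGLB A a) :
    a ∈ Set.range γ := by
  refine ⟨α a, ?_⟩
  have hlb : γ (α a) ∈ lowerBounds A := by
    intro x hx
    obtain ⟨m, rfl⟩ := hA hx
    have h1 : γ (α a) ≤ γ (α (γ m)) := hγ (hα (ha.1 hx))
    have h2 : γ (α (γ m)) = γ m := congrFun lc4 m
    exact h1.trans_eq h2
  exact le_antisymm (ha.2 hlb) (lc1 a)
end

section
/- Let (L, α, γ, M) be an increasing Lagois connection and A ⊆ γ[M]. If A has a join ǎ in L, then γ(α(ǎ)) is the join of A in the subposet γ[M]. -/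
theorem stmt_8 {L M : Type*} [PartialOrder L] [PartialOrder M]
    (α : L → M) (γ : M → L)
    (hα : Monotone α) (hγ : Monotone γ)
    (lc1 : ∀ l, l ≤ γ (α l)) (lc2 : ∀ m, m ≤ α (γ m))
    (lc3 : α ∘ γ ∘ α = α) (lc4 : γ ∘ α ∘ γ = γ)
    (A : Set L) (hA : A ⊆ Set.range γ)
    (a : L) (ha : IsLUB A a) :
    γ (α a) ∈ Set.range γ ∧
    (∀ x ∈ A, x ≤ γ (α a)) ∧
    (∀ b ∈ Set.range γ, (∀ x ∈ A, x ≤ b) → γ (α a) ≤ b) := by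
  refine ⟨⟨α a, rfl⟩, fun x hx => (ha.1 hx).trans (lc1 a), ?_⟩
  rintro b ⟨m, rfl⟩ hb
  have : a ≤ γ m := ha.2 hb
  calc γ (α a) ≤ γ (α (γ m)) := hγ (hα this)
    _ = γ m := congrFun lc4 m
end

section
/- In an increasing Lagois connection between complete lattices, the two monotone maps uniquely determine each other: for every m ∈ M, γ(m) equals the supremum of the preimage α⁻¹ of the infimum of the set { m* ∈ α[L] | m ≤ m* }. -/
theorem stmt_9 {L M : Type*} [CompleteLattice L] [CompleteLattice M]
    (α : L → M) (γ : M → L)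
    (hα : Monotone α) (hγ : Monotone γ)
    (lc1 : ∀ l, l ≤ γ (α l)) (lc2 : ∀ m, m ≤ α (γ m))
    (lc3 : α ∘ γ ∘ α = α) (lc4 : γ ∘ α ∘ γ = γ) :
    ∀ m : M, γ m = sSup {l : L | α l = sInf {m' | m' ∈ Set.range α ∧ m ≤ m'}} := by
  intro m
  have hinf : sInf {m' | m' ∈ Set.range α ∧ m ≤ m'} = α (γ m) := by
    apply le_antisymm
    · exact sInf_le ⟨⟨γ m, rfl⟩, lc2 m⟩
    · apply le_sInf
      rintro m' ⟨⟨l, rfl⟩, hm⟩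
      calc α (γ m) ≤ α (γ (α l)) := hα (hγ hm)
        _ = α l := congrFun lc3 l
  rw [hinf]
  apply le_antisymm
  · exact le_sSup rfl
  · apply sSup_le
    intro l hl
    calc l ≤ γ (α l) := lc1 l
      _ = γ (α (γ m)) := by rw [hl]
      _ = γ m := congrFun lc4 m
end

section
/- If (L, α, γ, M) and (L, α, γ', M) are both increasing Lagois connections with the same first component α, then γ = γ'. -/
theorem stmt_10 {L M : Type*} [PartialOrder L] [PartialOrder M]
    (α : L → M) (γ γ' : M → L)
    (hα : Monotone α) (hγ : Monotone γ) (hγ' : Monotone γ')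
    (lc1 : ∀ l, l ≤ γ (α l)) (lc2 : ∀ m, m ≤ α (γ m))
    (lc3 : α ∘ γ ∘ α = α) (lc4 : γ ∘ α ∘ γ = γ)
    (lc1' : ∀ l, l ≤ γ' (α l)) (lc2' : ∀ m, m ≤ α (γ' m))
    (lc3' : α ∘ γ' ∘ α = α) (lc4' : γ' ∘ α ∘ γ' = γ') :
    γ = γ' := by
  have key : ∀ m, γ (α (γ' m)) = γ' m := by
    intro m
    apply le_antisymm
    · have h1 : γ (α (γ' m)) ≤ γ' (α (γ (α (γ' m)))) := lc1' _
      have h2 : α (γ (α (γ' m))) = α (γ' m) := congrFun lc3 (γ' m)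
      rw [h2] at h1
      calc γ (α (γ' m)) ≤ γ' (α (γ' m)) := h1
        _ = γ' m := congrFun lc4' m
    · exact lc1 (γ' m)
  have key' : ∀ m, γ' (α (γ m)) = γ m := by
    intro m
    apply le_antisymm
    · have h3 : γ' (α (γ m)) ≤ γ (α (γ' (α (γ m)))) := lc1 _
      have h2 : α (γ' (α (γ m))) = α (γ m) := congrFun lc3' (γ m)
      rw [h2] at h3
      calc γ' (α (γ m)) ≤ γ (α (γ m)) := h3
        _ = γ m := congrFun lc4 m
    · exact lc1' (γ m)
  funext m
  apply le_antisymm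
  · calc γ m ≤ γ (α (γ' m)) := hγ (lc2' m)
      _ = γ' m := key m
  · calc γ' m ≤ γ' (α (γ m)) := hγ' (lc2 m)
      _ = γ m := key' m
end

section
/- An increasing Lagois connection (L, α, γ, M) satisfies the precision condition PC2: for every m in the image α[L], γ(m) is the supremum of the set { l ∈ L | α(l) = m }. -/
theorem stmt_11 {L M : Type*} [CompleteLattice L] [CompleteLattice M]
    (α : L → M) (γ : M → L)
    (hα : Monotone α) (hγ : Monotone γ)
    (lc1 : ∀ l, l ≤ γ (α l)) (lc2 : ∀ m, m ≤ α (γ m))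
    (lc3 : α ∘ γ ∘ α = α) (lc4 : γ ∘ α ∘ γ = γ) :
    ∀ m ∈ Set.range α, γ m = sSup {l : L | α l = m} := by
  rintro m ⟨l₀, rfl⟩
  apply le_antisymm
  · exact le_sSup (congrFun lc3 l₀)
  · exact sSup_le fun l hl => hl ▸ lc1 l
end

section
/- An increasing Lagois connection (L, α, γ, M) satisfies the precision condition PC1: for every l in the image γ[M], α(l) is the supremum of the set { m ∈ M | γ(m) = l }. -/
theorem stmt_12 {L M : Type*} [CompleteLattice L] [CompleteLattice M]
    (α : L → M) (γ : M → L)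
    (hα : Monotone α) (hγ : Monotone γ)
    (lc1 : ∀ l, l ≤ γ (α l)) (lc2 : ∀ m, m ≤ α (γ m))
    (lc3 : α ∘ γ ∘ α = α) (lc4 : γ ∘ α ∘ γ = γ) :
    ∀ l ∈ Set.range γ, α l = sSup {m : M | γ m = l} := by
  rintro l ⟨m0, rfl⟩
  apply le_antisymm
  · exact le_sSup (congrFun lc4 m0)
  · apply sSup_le
    intro m hm
    calc m ≤ α (γ m) := lc2 m
    _ = α (γ m0) := by rw [hm]
end

section
/- Let c : L → L and i : M → M be closure operators on posets L and M whose images c[L] and i[M] are order-isomorphic via h : c[L] → i[M]. Then (L, h∘c, c∘h⁻¹∘i, M) is an increasing Lagois connection (where h∘c maps l to h(c(l)) and the second map sends m to h⁻¹(i(m)), viewed as an element of L). -/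
theorem stmt_14 {L M : Type*} [PartialOrder L] [PartialOrder M]
    (c : L → L) (i : M → M)
    (hc : Monotone c) (hc1 : ∀ x, x ≤ c x) (hc2 : ∀ x, c (c x) = c x)
    (hi : Monotone i) (hi1 : ∀ y, y ≤ i y) (hi2 : ∀ y, i (i y) = i y)
    (h : Set.range c ≃o Set.range i) :
    let α : L → M := fun l => (h ⟨c l, ⟨l, rfl⟩⟩ : Set.range i)
    let γ : M → L := fun m => (h.symm ⟨i m, ⟨m, rfl⟩⟩ : Set.range c)
    Monotone α ∧ Monotone γ ∧
    (∀ l, l ≤ γ (α l)) ∧ (∀ m, m ≤ α (γ m)) ∧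
    α ∘ γ ∘ α = α ∧ γ ∘ α ∘ γ = γ := by
  intro α γ
  have hfixc : ∀ a : Set.range c, c (a : L) = a := by rintro ⟨_, y, rfl⟩; exact hc2 y
  have hfixi : ∀ b : Set.range i, i (b : M) = b := by rintro ⟨_, y, rfl⟩; exact hi2 y
  have hγα : ∀ l, γ (α l) = c l := by
    intro l
    have e : (⟨i (α l), ⟨α l, rfl⟩⟩ : Set.range i) = h ⟨c l, ⟨l, rfl⟩⟩ :=
      Subtype.ext (hfixi (h ⟨c l, ⟨l, rfl⟩⟩))
    show ((h.symm ⟨i (α l), ⟨α l, rfl⟩⟩ : Set.range c) : L) = c l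
    rw [e, h.symm_apply_apply]
  have hαγ : ∀ m, α (γ m) = i m := by
    intro m
    have e : (⟨c (γ m), ⟨γ m, rfl⟩⟩ : Set.range c) = h.symm ⟨i m, ⟨m, rfl⟩⟩ :=
      Subtype.ext (hfixc (h.symm ⟨i m, ⟨m, rfl⟩⟩))
    show ((h ⟨c (γ m), ⟨γ m, rfl⟩⟩ : Set.range i) : M) = i m
    rw [e, h.apply_symm_apply]
  refine ⟨?_, ?_, ?_, ?_, ?_, ?_⟩
  · intro a b hab
    exact Subtype.coe_le_coe.mpr (h.monotone (Subtype.mk_le_mk.mpr (hc hab)))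
  · intro a b hab
    exact Subtype.coe_le_coe.mpr (h.symm.monotone (Subtype.mk_le_mk.mpr (hi hab)))
  · intro l; rw [hγα]; exact hc1 l
  · intro m; rw [hαγ]; exact hi1 m
  · funext l
    show α (γ (α l)) = α l
    rw [hγα]
    show ((h ⟨c (c l), ⟨c l, rfl⟩⟩ : Set.range i) : M) = α l
    congr 1
    exact congrArg h (Subtype.ext (hc2 l))
  · funext m
    show γ (α (γ m)) = γ m
    rw [hαγ]
    show ((h.symm ⟨i (i m), ⟨i m, rfl⟩⟩ : Set.range c) : L) = γ m
    congr 1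
    exact congrArg h.symm (Subtype.ext (hi2 m))
end

section
/- If (L, α₁, γ₁, M) and (M, α₂, γ₂, Q) are increasing Lagois connections and γ₂[Q] ⊆ α₁[L], then (L, α₂∘α₁, γ₁∘γ₂, Q) is an increasing Lagois connection. -/
theorem stmt_15 {L M Q : Type*} [PartialOrder L] [PartialOrder M] [PartialOrder Q]
    (α₁ : L → M) (γ₁ : M → L) (α₂ : M → Q) (γ₂ : Q → M)
    (hα₁ : Monotone α₁) (hγ₁ : Monotone γ₁)
    (lc1 : ∀ l, l ≤ γ₁ (α₁ l)) (lc2 : ∀ m, m ≤ α₁ (γ₁ m))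
    (lc3 : α₁ ∘ γ₁ ∘ α₁ = α₁) (lc4 : γ₁ ∘ α₁ ∘ γ₁ = γ₁)
    (hα₂ : Monotone α₂) (hγ₂ : Monotone γ₂)
    (lc1' : ∀ m, m ≤ γ₂ (α₂ m)) (lc2' : ∀ q, q ≤ α₂ (γ₂ q))
    (lc3' : α₂ ∘ γ₂ ∘ α₂ = α₂) (lc4' : γ₂ ∘ α₂ ∘ γ₂ = γ₂)
    (hsub : Set.range γ₂ ⊆ Set.range α₁) :
    Monotone (α₂ ∘ α₁) ∧ Monotone (γ₁ ∘ γ₂) ∧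
    (∀ l, l ≤ (γ₁ ∘ γ₂) ((α₂ ∘ α₁) l)) ∧
    (∀ q, q ≤ (α₂ ∘ α₁) ((γ₁ ∘ γ₂) q)) ∧
    (α₂ ∘ α₁) ∘ (γ₁ ∘ γ₂) ∘ (α₂ ∘ α₁) = α₂ ∘ α₁ ∧
    (γ₁ ∘ γ₂) ∘ (α₂ ∘ α₁) ∘ (γ₁ ∘ γ₂) = γ₁ ∘ γ₂ := by
  have key : ∀ m, α₁ (γ₁ (γ₂ (α₂ m))) = γ₂ (α₂ m) := by
    intro m
    obtain ⟨l, hl⟩ := hsub ⟨α₂ m, rfl⟩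
    rw [← hl]
    exact congrFun lc3 l
  have lc4'' : ∀ q, γ₂ (α₂ (γ₂ q)) = γ₂ q := fun q => congrFun lc4' q
  have key2 : ∀ q, α₁ (γ₁ (γ₂ q)) = γ₂ q := by
    intro q
    have := key (γ₂ q)
    rwa [lc4'' q] at this
  refine ⟨hα₂.comp hα₁, hγ₁.comp hγ₂, ?_, ?_, ?_, ?_⟩
  · intro l
    exact le_trans (lc1 l) (hγ₁ (lc1' (α₁ l)))
  · intro q
    simp only [Function.comp, key2]
    exact lc2' q
  · funext l
    simp only [Function.comp, key]
    exact congrFun lc3' (α₁ l)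
  · funext q
    simp only [Function.comp, key2]
    exact congrArg γ₁ (lc4'' q)
end

section
/- If (L, α₁, γ₁, M) and (M, α₂, γ₂, Q) are increasing Lagois connections and α₁[L] ⊆ γ₂[Q], then (L, α₂∘α₁, γ₁∘γ₂, Q) is an increasing Lagois connection. -/
theorem stmt_16 {L M Q : Type*} [PartialOrder L] [PartialOrder M] [PartialOrder Q]
    (α₁ : L → M) (γ₁ : M → L) (α₂ : M → Q) (γ₂ : Q → M)
    (hα₁ : Monotone α₁) (hγ₁ : Monotone γ₁)
    (lc1 : ∀ l, l ≤ γ₁ (α₁ l)) (lc2 : ∀ m, m ≤ α₁ (γ₁ m))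
    (lc3 : α₁ ∘ γ₁ ∘ α₁ = α₁) (lc4 : γ₁ ∘ α₁ ∘ γ₁ = γ₁)
    (hα₂ : Monotone α₂) (hγ₂ : Monotone γ₂)
    (lc1' : ∀ m, m ≤ γ₂ (α₂ m)) (lc2' : ∀ q, q ≤ α₂ (γ₂ q))
    (lc3' : α₂ ∘ γ₂ ∘ α₂ = α₂) (lc4' : γ₂ ∘ α₂ ∘ γ₂ = γ₂)
    (hsub : Set.range α₁ ⊆ Set.range γ₂) :
    Monotone (α₂ ∘ α₁) ∧ Monotone (γ₁ ∘ γ₂) ∧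
    (∀ l, l ≤ (γ₁ ∘ γ₂) ((α₂ ∘ α₁) l)) ∧
    (∀ q, q ≤ (α₂ ∘ α₁) ((γ₁ ∘ γ₂) q)) ∧
    (α₂ ∘ α₁) ∘ (γ₁ ∘ γ₂) ∘ (α₂ ∘ α₁) = α₂ ∘ α₁ ∧
    (γ₁ ∘ γ₂) ∘ (α₂ ∘ α₁) ∘ (γ₁ ∘ γ₂) = γ₁ ∘ γ₂ := by
  have key : ∀ l, γ₂ (α₂ (α₁ l)) = α₁ l := by
    intro l
    obtain ⟨q, hq⟩ := hsub ⟨l, rfl⟩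
    rw [← hq]
    exact congrFun lc4' q
  refine ⟨hα₂.comp hα₁, hγ₁.comp hγ₂, ?_, ?_, ?_, ?_⟩
  · intro l
    simp only [Function.comp_apply, key]
    exact lc1 l
  · intro q
    exact le_trans (lc2' q) (hα₂ (le_trans (lc2 (γ₂ q)) (le_of_eq rfl)))
  · funext l
    simp only [Function.comp_apply, key]
    exact congrArg α₂ (congrFun lc3 l)
  · funext q
    simp only [Function.comp_apply, key]
    exact congrFun lc4 (γ₂ q)
end

section
/- Let (L, α₁, γ₁, M) and (M, α₂, γ₂, Q) be increasing Lagois connections. Then (L, α₂∘α₁, γ₁∘γ₂, Q) is an increasing Lagois connection if and only if γ₂[α₂[α₁[L]]] ⊆ α₁[L] and α₁[γ₁[γ₂[Q]]] ⊆ γ₂[Q]. -/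
theorem stmt_17 {L M Q : Type*} [PartialOrder L] [PartialOrder M] [PartialOrder Q]
    (α₁ : L → M) (γ₁ : M → L) (α₂ : M → Q) (γ₂ : Q → M)
    (hα₁ : Monotone α₁) (hγ₁ : Monotone γ₁)
    (lc1 : ∀ l, l ≤ γ₁ (α₁ l)) (lc2 : ∀ m, m ≤ α₁ (γ₁ m))
    (lc3 : α₁ ∘ γ₁ ∘ α₁ = α₁) (lc4 : γ₁ ∘ α₁ ∘ γ₁ = γ₁)
    (hα₂ : Monotone α₂) (hγ₂ : Monotone γ₂)
    (lc1' : ∀ m, m ≤ γ₂ (α₂ m)) (lc2' : ∀ q, q ≤ α₂ (γ₂ q))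
    (lc3' : α₂ ∘ γ₂ ∘ α₂ = α₂) (lc4' : γ₂ ∘ α₂ ∘ γ₂ = γ₂) :
    (Monotone (α₂ ∘ α₁) ∧ Monotone (γ₁ ∘ γ₂) ∧
     (∀ l, l ≤ (γ₁ ∘ γ₂) ((α₂ ∘ α₁) l)) ∧
     (∀ q, q ≤ (α₂ ∘ α₁) ((γ₁ ∘ γ₂) q)) ∧
     (α₂ ∘ α₁) ∘ (γ₁ ∘ γ₂) ∘ (α₂ ∘ α₁) = α₂ ∘ α₁ ∧
     (γ₁ ∘ γ₂) ∘ (α₂ ∘ α₁) ∘ (γ₁ ∘ γ₂) = γ₁ ∘ γ₂)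
    ↔ (γ₂ '' (α₂ '' (α₁ '' Set.univ)) ⊆ α₁ '' Set.univ ∧
       α₁ '' (γ₁ '' (γ₂ '' Set.univ)) ⊆ γ₂ '' Set.univ) := by
  constructor
  · rintro ⟨-, -, -, -, h5, h6⟩
    constructor
    · rintro m ⟨_, ⟨_, ⟨l, -, rfl⟩, rfl⟩, rfl⟩
      refine ⟨γ₁ (γ₂ (α₂ (α₁ l))), trivial, ?_⟩
      apply le_antisymm
      · calc α₁ (γ₁ (γ₂ (α₂ (α₁ l))))
            ≤ γ₂ (α₂ (α₁ (γ₁ (γ₂ (α₂ (α₁ l)))))) := lc1' _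
          _ = γ₂ (α₂ (α₁ l)) := by
              have := congrFun h5 l
              simp only [Function.comp_apply] at this
              rw [this]
      · exact lc2 _
    · rintro m ⟨_, ⟨_, ⟨q, -, rfl⟩, rfl⟩, rfl⟩
      refine ⟨α₂ (α₁ (γ₁ (γ₂ q))), trivial, ?_⟩
      apply le_antisymm
      · calc γ₂ (α₂ (α₁ (γ₁ (γ₂ q))))
            ≤ α₁ (γ₁ (γ₂ (α₂ (α₁ (γ₁ (γ₂ q)))))) := lc2 _
          _ = α₁ (γ₁ (γ₂ q)) := by
              have := congrFun h6 q
              simp only [Function.comp_apply] at this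
              rw [this]
      · exact lc1' _
  · rintro ⟨h1, h2⟩
    refine ⟨hα₂.comp hα₁, hγ₁.comp hγ₂, ?_, ?_, ?_, ?_⟩
    · intro l
      exact (lc1 l).trans (hγ₁ (lc1' (α₁ l)))
    · intro q
      exact (lc2' q).trans (hα₂ (lc2 (γ₂ q)))
    · funext l
      simp only [Function.comp_apply]
      obtain ⟨l', -, hl'⟩ := h1 ⟨_, ⟨_, ⟨l, trivial, rfl⟩, rfl⟩, rfl⟩
      have e1 : α₁ (γ₁ (γ₂ (α₂ (α₁ l)))) = γ₂ (α₂ (α₁ l)) := by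
        rw [← hl']
        exact congrFun lc3 l'
      rw [e1]
      exact congrFun lc3' (α₁ l)
    · funext q
      simp only [Function.comp_apply]
      obtain ⟨q', -, hq'⟩ := h2 ⟨_, ⟨_, ⟨q, trivial, rfl⟩, rfl⟩, rfl⟩
      have e1 : γ₂ (α₂ (α₁ (γ₁ (γ₂ q)))) = α₁ (γ₁ (γ₂ q)) := by
        rw [← hq']
        exact congrFun lc4' q'
      rw [e1]
      exact congrFun lc4 (γ₂ q)
end

section
/- If α : L → M is monotone and γ : M → L is a monotone semi-inverse of α (i.e., α∘γ∘α = α) such that l ≤ γ(α(l)) for all l ∈ L and m ≤ α(γ(m)) for all m ∈ M, then (L, α, γ∘α∘γ, M) is an increasing Lagois connection. -/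
theorem stmt_18 {L M : Type*} [PartialOrder L] [PartialOrder M]
    (α : L → M) (γ : M → L)
    (hα : Monotone α) (hγ : Monotone γ)
    (hsemi : α ∘ γ ∘ α = α)
    (hinc1 : ∀ l, l ≤ γ (α l)) (hinc2 : ∀ m, m ≤ α (γ m)) :
    Monotone α ∧ Monotone (γ ∘ α ∘ γ) ∧
    (∀ l, l ≤ (γ ∘ α ∘ γ) (α l)) ∧
    (∀ m, m ≤ α ((γ ∘ α ∘ γ) m)) ∧
    α ∘ (γ ∘ α ∘ γ) ∘ α = α ∧
    (γ ∘ α ∘ γ) ∘ α ∘ (γ ∘ α ∘ γ) = γ ∘ α ∘ γ := by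
  have hs : ∀ l, α (γ (α l)) = α l := fun l => congrFun hsemi l
  refine ⟨hα, hγ.comp (hα.comp hγ), ?_, ?_, ?_, ?_⟩
  · intro l
    calc l ≤ γ (α l) := hinc1 l
    _ = γ (α (γ (α l))) := by rw [hs]
  · intro m
    calc m ≤ α (γ m) := hinc2 m
    _ = α (γ (α (γ m))) := by rw [hs]
  · funext l; simp [hs]
  · funext m; simp [hs]
end

section
/- Let (P, α, γ, R) be an increasing Lagois connection between two preorders of principals. Define lifted maps on finite sets of principals by taking images: α̂(S) = α[S] and γ̂(T) = γ[T], where sets of principals are preordered by S ⊑ T iff for every t ∈ T there exists s ∈ S with s ≤ t. Then α̂ and γ̂ are monotone, x ⊑ γ̂(α̂(x)) and y ⊑ α̂(γ̂(y)) hold for all sets x, y, and α̂∘γ̂∘α̂(x) is equivalent to α̂(x) (each is ⊑ the other) and γ̂∘α̂∘γ̂(y) is equivalent to γ̂(y). -/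
/-- Simplified reader-set preorder on finite sets of principals:
`S ⊑ T` iff every element of `T` dominates some element of `S`. -/
def setLE {P : Type*} [Preorder P] (S T : Finset P) : Prop :=
  ∀ t ∈ T, ∃ s ∈ S, s ≤ t

theorem stmt_19 {P R : Type*} [Preorder P] [Preorder R]
    [DecidableEq P] [DecidableEq R]
    (α : P → R) (γ : R → P)
    (hα : Monotone α) (hγ : Monotone γ)
    (lc1 : ∀ p, p ≤ γ (α p)) (lc2 : ∀ r, r ≤ α (γ r))
    (lc3 : α ∘ γ ∘ α = α) (lc4 : γ ∘ α ∘ γ = γ) :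
    (∀ S S' : Finset P, setLE S S' → setLE (S.image α) (S'.image α)) ∧
    (∀ T T' : Finset R, setLE T T' → setLE (T.image γ) (T'.image γ)) ∧
    (∀ S : Finset P, setLE S ((S.image α).image γ)) ∧
    (∀ T : Finset R, setLE T ((T.image γ).image α)) ∧
    (∀ S : Finset P,
      setLE (((S.image α).image γ).image α) (S.image α) ∧
      setLE (S.image α) (((S.image α).image γ).image α)) ∧
    (∀ T : Finset R,
      setLE (((T.image γ).image α).image γ) (T.image γ) ∧
      setLE (T.image γ) (((T.image γ).image α).image γ)) := by
  have e3 : ∀ p, α (γ (α p)) = α p := fun p => congrFun lc3 p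
  have e4 : ∀ r, γ (α (γ r)) = γ r := fun r => congrFun lc4 r
  refine ⟨?_, ?_, ?_, ?_, ?_, ?_⟩
  · intro S S' h t ht
    simp only [Finset.mem_image] at ht ⊢
    obtain ⟨p, hp, rfl⟩ := ht
    obtain ⟨s, hs, hle⟩ := h p hp
    exact ⟨α s, ⟨s, hs, rfl⟩, hα hle⟩
  · intro T T' h t ht
    simp only [Finset.mem_image] at ht ⊢
    obtain ⟨r, hr, rfl⟩ := ht
    obtain ⟨s, hs, hle⟩ := h r hr
    exact ⟨γ s, ⟨s, hs, rfl⟩, hγ hle⟩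
  · intro S t ht
    simp only [Finset.mem_image] at ht
    obtain ⟨r, ⟨p, hp, rfl⟩, rfl⟩ := ht
    exact ⟨p, hp, lc1 p⟩
  · intro T t ht
    simp only [Finset.mem_image] at ht
    obtain ⟨p, ⟨r, hr, rfl⟩, rfl⟩ := ht
    exact ⟨r, hr, lc2 r⟩
  · intro S
    constructor
    · intro t ht
      simp only [Finset.mem_image] at ht ⊢
      obtain ⟨p, hp, rfl⟩ := ht
      exact ⟨α (γ (α p)), ⟨γ (α p), ⟨α p, ⟨p, hp, rfl⟩, rfl⟩, rfl⟩, (e3 p).le⟩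
    · intro t ht
      simp only [Finset.mem_image] at ht ⊢
      obtain ⟨p, ⟨q, ⟨x, hx, rfl⟩, rfl⟩, rfl⟩ := ht
      exact ⟨α x, ⟨x, hx, rfl⟩, (e3 x).ge⟩
  · intro T
    constructor
    · intro t ht
      simp only [Finset.mem_image] at ht ⊢
      obtain ⟨r, hr, rfl⟩ := ht
      exact ⟨γ (α (γ r)), ⟨α (γ r), ⟨γ r, ⟨r, hr, rfl⟩, rfl⟩, rfl⟩, (e4 r).le⟩
    · intro t ht
      simp only [Finset.mem_image] at ht ⊢
      obtain ⟨p, ⟨q, ⟨x, hx, rfl⟩, rfl⟩, rfl⟩ := ht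
      exact ⟨γ x, ⟨x, hx, rfl⟩, (e4 x).ge⟩
end
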